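/- Let C ↠ B be an A-Galois coextension with canonical entwining map ψ. Then C ∈ M_A^C(ψ) with structure maps Δ and μ_C, i.e. Δ ∘ μ_C = (μ_C ⊗ C) ∘ (C ⊗ ψ) ∘ (Δ ⊗ A). Moreover ψ is the unique entwining map with this property: any entwining map ψ̃ with Δ ∘ μ_C = (μ_C ⊗ C)∘(C ⊗ ψ̃)∘(Δ ⊗ A) equals ψ. -/

import Mathlib

open TensorProduct LinearMap Coalgebra

variable {k A C : Type*} [Field k] [Ring A] [Algebra k A]
  [AddCommGroup C] [Module k C] [Coalgebra k C]

/-- `μ : C ⊗ A → C` is a unital, associative right `A`-action on `C`. -/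
def IsAction (μ : C ⊗[k] A →ₗ[k] C) : Prop :=
  (∀ c : C, μ (c ⊗ₜ[k] (1 : A)) = c)
  ∧ (∀ (c : C) (a a' : A), μ (μ (c ⊗ₜ[k] a) ⊗ₜ[k] a') = μ (c ⊗ₜ[k] (a * a')))

/-- Action by a fixed element `a ∈ A`: `c ↦ μ(c ⊗ a)`. -/
noncomputable def actBy (μ : C ⊗[k] A →ₗ[k] C) (a : A) : C →ₗ[k] C :=
  μ ∘ₗ (TensorProduct.mk k C A).flip a

/-- The subspace `I` of Lemma 3.2: the span of all
`μ(c,a)₍₁₎ α(μ(c,a)₍₂₎) − c₍₁₎ α(μ(c₍₂₎,a))` for `a ∈ A`, `c ∈ C`, `α ∈ Hom(C,k)`. -/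
noncomputable def coidealI (μ : C ⊗[k] A →ₗ[k] C) : Submodule k C :=
  Submodule.span k {x : C | ∃ (a : A) (c : C) (α : C →ₗ[k] k), x =
    TensorProduct.rid k C (α.lTensor C (comul (R := k) (μ (c ⊗ₜ[k] a))))
      - TensorProduct.rid k C ((α ∘ₗ actBy μ a).lTensor C (comul (R := k) c))}

/-- `(π ⊗ C) ∘ Δ : C → B ⊗ C`, where `B = C / I` and `π` the quotient map. -/
noncomputable def coactL (μ : C ⊗[k] A →ₗ[k] C) :
    C →ₗ[k] (C ⧸ coidealI μ) ⊗[k] C :=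
  (coidealI μ).mkQ.rTensor C ∘ₗ comul (R := k)

/-- `(C ⊗ π) ∘ Δ : C → C ⊗ B`. -/
noncomputable def coactR (μ : C ⊗[k] A →ₗ[k] C) :
    C →ₗ[k] C ⊗[k] (C ⧸ coidealI μ) :=
  (coidealI μ).mkQ.lTensor C ∘ₗ comul (R := k)

/-- The coaction-equalising map `C ⊗ C → C ⊗ B ⊗ C` whose kernel is the
cotensor product `C □_B C`. -/
noncomputable def cotensorEq (μ : C ⊗[k] A →ₗ[k] C) :
    C ⊗[k] C →ₗ[k] C ⊗[k] ((C ⧸ coidealI μ) ⊗[k] C) :=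
  ((TensorProduct.assoc k C (C ⧸ coidealI μ) C).toLinearMap ∘ₗ (coactR μ).rTensor C)
    - (coactL μ).lTensor C

/-- The cotensor product `C □_B C ⊆ C ⊗ C`. -/
noncomputable def cotensor (μ : C ⊗[k] A →ₗ[k] C) : Submodule k (C ⊗[k] C) :=
  LinearMap.ker (cotensorEq μ)

/-- The canonical map `cocan = (C ⊗ μ) ∘ (Δ ⊗ A) : C ⊗ A → C ⊗ C`
(taking values in `C □_B C`). -/
noncomputable def cocanF (μ : C ⊗[k] A →ₗ[k] C) : C ⊗[k] A →ₗ[k] C ⊗[k] C :=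
  μ.lTensor C ∘ₗ (TensorProduct.assoc k C C A).toLinearMap
    ∘ₗ (comul (R := k) (A := C)).rTensor A

/-- `σ` is an inverse of `cocan` regarded as a map onto `C □_B C`, i.e. the
coextension `C ↠ B` is `A`-Galois. -/
def IsCocanInverse (μ : C ⊗[k] A →ₗ[k] C) (σ : C ⊗[k] C →ₗ[k] C ⊗[k] A) : Prop :=
  (LinearMap.range (cocanF μ) ≤ cotensor μ)
  ∧ (σ ∘ₗ cocanF μ = LinearMap.id)
  ∧ (∀ x ∈ cotensor μ, cocanF μ (σ x) = x)

/-- The cotranslation map `τ̌ = (ε ⊗ A) ∘ cocan⁻¹ : C □_B C → A`, expressed via a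
linear extension `σ` of `cocan⁻¹`. -/
noncomputable def cotrans (σ : C ⊗[k] C →ₗ[k] C ⊗[k] A) : C ⊗[k] C →ₗ[k] A :=
  (TensorProduct.lid k A).toLinearMap ∘ₗ (counit (R := k) (A := C)).rTensor A ∘ₗ σ

/-- The four axioms of an entwining structure `(A, C, ψ)`. -/
def IsEntwining (ψ : C ⊗[k] A →ₗ[k] A ⊗[k] C) : Prop :=
  (ψ ∘ₗ (LinearMap.mul' k A).lTensor C ∘ₗ (TensorProduct.assoc k C A A).toLinearMap
      = (LinearMap.mul' k A).rTensor C ∘ₗ (TensorProduct.assoc k A A C).symm.toLinearMap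
        ∘ₗ ψ.lTensor A ∘ₗ (TensorProduct.assoc k A C A).toLinearMap ∘ₗ ψ.rTensor A)
  ∧ (∀ c : C, ψ (c ⊗ₜ[k] (1 : A)) = (1 : A) ⊗ₜ[k] c)
  ∧ ((comul (R := k) (A := C)).lTensor A ∘ₗ ψ
      = (TensorProduct.assoc k A C C).toLinearMap ∘ₗ ψ.rTensor C
        ∘ₗ (TensorProduct.assoc k C A C).symm.toLinearMap ∘ₗ ψ.lTensor C
        ∘ₗ (TensorProduct.assoc k C C A).toLinearMap ∘ₗ (comul (R := k) (A := C)).rTensor A)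
  ∧ ((TensorProduct.rid k A).toLinearMap ∘ₗ (counit (R := k) (A := C)).lTensor A ∘ₗ ψ
      = (TensorProduct.lid k A).toLinearMap ∘ₗ (counit (R := k) (A := C)).rTensor A)

/-- The canonical entwining map `ψ = (τ̌ ⊗ C) ∘ (C ⊗ Δ) ∘ cocan` of an
`A`-Galois coextension. -/
noncomputable def cocanPsi (μ : C ⊗[k] A →ₗ[k] C) (σ : C ⊗[k] C →ₗ[k] C ⊗[k] A) :
    C ⊗[k] A →ₗ[k] A ⊗[k] C :=
  (cotrans σ).rTensor C ∘ₗ (TensorProduct.assoc k C C C).symm.toLinearMap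
    ∘ₗ (comul (R := k) (A := C)).lTensor C ∘ₗ cocanF μ

/-!
Maps `C ⊗ M → N` compose as co-Kleisli maps of the comonad `C ⊗ -`,
`g ⊚ f = g ∘ (C ⊗ f) ∘ (Δ ⊗ M)`, with identity `ε ⊗ M`. In this language `cocan = id ⊚ μ`,
`ψ = (τ̌ ⊗ C) ⊚ (Δ ∘ μ)`, and the right-hand side of the module condition for `φ` is
`(μ ⊗ C) ⊚ φ`. Since `τ̌ ⊚ μ = τ̌ ∘ cocan = ε ⊗ A`, we have `(τ̌ ⊗ C) ⊚ (μ ⊗ C) ⊚ φ = φ`, so any `φ`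
with `Δ ∘ μ = (μ ⊗ C) ⊚ φ` equals `(τ̌ ⊗ C) ⊚ (Δ ∘ μ) = ψ`.

For existence, `(μ ⊗ C) ⊚ ψ = ((μ ⊚ τ̌) ⊗ C) ⊚ (Δ ∘ μ)`, and `μ ⊚ τ̌` agrees with `ε ⊗ C` on
`C □_B C = cocan (C ⊗ A)`. The two maps whose difference cuts out `C □_B C` are right
`C`-colinear and `k` is a field, so `(C ⊗ Δ) ∘ cocan` lands in `(C □_B C) ⊗ C`. There `μ ⊚ τ̌`
may be replaced by `ε ⊗ C`, which turns the right-hand side into `(ε ⊗ C ⊗ C) ⊚ (Δ ∘ μ) = Δ ∘ μ`.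
-/

namespace CofreeComodule

variable {R D M N P Q : Type*} [CommSemiring R] [AddCommMonoid D] [Module R D] [Coalgebra R D]
  [AddCommMonoid M] [Module R M] [AddCommMonoid N] [Module R N]
  [AddCommMonoid P] [Module R P] [AddCommMonoid Q] [Module R Q]

variable (R D M) in
noncomputable def leftCoaction : D ⊗[R] M →ₗ[R] D ⊗[R] (D ⊗[R] M) :=
  (TensorProduct.assoc R D D M).toLinearMap ∘ₗ (comul (R := R) (A := D)).rTensor M

variable (R D M) in
noncomputable def counitLeft : D ⊗[R] M →ₗ[R] M :=
  (TensorProduct.lid R M).toLinearMap ∘ₗ (counit (R := R) (A := D)).rTensor M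

noncomputable def coKleisliComp (g : D ⊗[R] P →ₗ[R] Q) (f : D ⊗[R] M →ₗ[R] P) :
    D ⊗[R] M →ₗ[R] Q :=
  g ∘ₗ f.lTensor D ∘ₗ leftCoaction R D M

infixr:80 " ⊚ " => coKleisliComp

variable (N) in
noncomputable def coKleisliRTensor (f : D ⊗[R] M →ₗ[R] P) :
    D ⊗[R] (M ⊗[R] N) →ₗ[R] P ⊗[R] N :=
  f.rTensor N ∘ₗ (TensorProduct.assoc R D M N).symm.toLinearMap

@[simp]
lemma counitLeft_tmul (d : D) (m : M) : counitLeft R D M (d ⊗ₜ m) = counit (R := R) d • m := by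
  simp [counitLeft]

lemma leftCoaction_comp_lTensor (g : M →ₗ[R] N) :
    leftCoaction R D N ∘ₗ g.lTensor D = (g.lTensor D).lTensor D ∘ₗ leftCoaction R D M := by
  ext d m
  simp [leftCoaction, ← (ℛ R d).eq, sum_tmul, map_sum]

lemma leftCoaction_coassoc :
    leftCoaction R D (D ⊗[R] M) ∘ₗ leftCoaction R D M
      = (leftCoaction R D M).lTensor D ∘ₗ leftCoaction R D M := by
  ext d m
  have h := congrArg (fun x => ((TensorProduct.assoc R D D M).toLinearMap.lTensor D)
    (TensorProduct.assoc R D (D ⊗[R] D) M (x ⊗ₜ[R] m)))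
    (sum_tmul_tmul_eq (ℛ R d) (fun i => ℛ R ((ℛ R d).left i)) (fun i => ℛ R ((ℛ R d).right i)))
  simpa [leftCoaction, ← (ℛ R d).eq, ← (ℛ R ((ℛ R d).left _)).eq,
    ← (ℛ R ((ℛ R d).right _)).eq, sum_tmul, tmul_sum, map_sum] using h

lemma counitLeft_comp_lTensor (g : M →ₗ[R] N) :
    counitLeft R D N ∘ₗ g.lTensor D = g ∘ₗ counitLeft R D M := by
  ext d m
  simp

lemma counitLeft_comp_leftCoaction :
    counitLeft R D (D ⊗[R] M) ∘ₗ leftCoaction R D M = LinearMap.id := by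
  ext d m
  simpa [leftCoaction, ← (ℛ R d).eq, sum_tmul, map_sum, smul_tmul']
    using congrArg (· ⊗ₜ[R] m) (sum_counit_smul (ℛ R d))

lemma lTensor_counitLeft_comp_leftCoaction :
    (counitLeft R D M).lTensor D ∘ₗ leftCoaction R D M = LinearMap.id := by
  ext d m
  have h := congrArg (TensorProduct.rid R D) (sum_tmul_counit_eq (ℛ R d))
  simp only [map_sum, rid_tmul, one_smul] at h
  simpa [leftCoaction, ← (ℛ R d).eq, sum_tmul, map_sum, smul_tmul', tmul_smul]
    using congrArg (· ⊗ₜ[R] m) h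

lemma coKleisliComp_assoc {S : Type*} [AddCommMonoid S] [Module R S] (h : D ⊗[R] Q →ₗ[R] S)
    (g : D ⊗[R] P →ₗ[R] Q) (f : D ⊗[R] M →ₗ[R] P) : (h ⊚ g) ⊚ f = h ⊚ (g ⊚ f) := by
  simp only [coKleisliComp, LinearMap.lTensor_comp, LinearMap.comp_assoc]
  congr 2
  rw [← LinearMap.comp_assoc, leftCoaction_comp_lTensor, LinearMap.comp_assoc, leftCoaction_coassoc]

lemma counitLeft_coKleisliComp (f : D ⊗[R] M →ₗ[R] P) : counitLeft R D P ⊚ f = f := by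
  rw [coKleisliComp, ← LinearMap.comp_assoc, counitLeft_comp_lTensor, LinearMap.comp_assoc,
    counitLeft_comp_leftCoaction, LinearMap.comp_id]

lemma coKleisliComp_counitLeft (g : D ⊗[R] M →ₗ[R] P) : g ⊚ counitLeft R D M = g := by
  rw [coKleisliComp, lTensor_counitLeft_comp_leftCoaction, LinearMap.comp_id]

lemma coKleisliRTensor_counitLeft :
    coKleisliRTensor N (counitLeft R D M) = counitLeft R D (M ⊗[R] N) := by
  ext d m n
  simp [coKleisliRTensor, smul_tmul']

lemma coKleisliRTensor_coKleisliComp (g : D ⊗[R] P →ₗ[R] Q) (f : D ⊗[R] M →ₗ[R] P) :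
    coKleisliRTensor N g ⊚ coKleisliRTensor N f = coKleisliRTensor N (g ⊚ f) := by
  ext d m n
  simp [coKleisliComp, coKleisliRTensor, leftCoaction, ← (ℛ R d).eq, sum_tmul, map_sum]

end CofreeComodule

namespace GaloisCoextension

open CofreeComodule

variable {μ : C ⊗[k] A →ₗ[k] C} {σ : C ⊗[k] C →ₗ[k] C ⊗[k] A}

lemma rTensor_coactL_comp_comul :
    (coactL μ).rTensor C ∘ₗ comul
      = (TensorProduct.assoc k (C ⧸ coidealI μ) C C).symm.toLinearMap
          ∘ₗ (comul (R := k) (A := C)).lTensor (C ⧸ coidealI μ) ∘ₗ coactL μ := by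
  ext v
  simp only [coactL, LinearMap.coe_comp, Function.comp_apply, LinearEquiv.coe_coe]
  rw [LinearMap.rTensor_comp_apply, ← coassoc_symm_apply]
  induction comul (R := k) v using TensorProduct.induction_on with
  | zero => simp
  | tmul x y => simp [← (ℛ k y).eq, tmul_sum, map_sum]
  | add y z hy hz => simp only [map_add, hy, hz]

lemma rTensor_cotensorEq_comp_lTensor_comul :
    (cotensorEq μ).rTensor C ∘ₗ (TensorProduct.assoc k C C C).symm.toLinearMap
        ∘ₗ (comul (R := k) (A := C)).lTensor C
      = (TensorProduct.assoc k C ((C ⧸ coidealI μ) ⊗[k] C) C).symm.toLinearMap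
          ∘ₗ ((TensorProduct.assoc k (C ⧸ coidealI μ) C C).symm.toLinearMap
            ∘ₗ (comul (R := k) (A := C)).lTensor (C ⧸ coidealI μ)).lTensor C
          ∘ₗ cotensorEq μ := by
  simp only [cotensorEq, LinearMap.rTensor_sub, LinearMap.sub_comp, LinearMap.comp_sub]
  congr 1
  · refine TensorProduct.ext' fun (u v : C) => ?_
    simp only [coactR, LinearMap.comp_apply, LinearEquiv.coe_coe, lTensor_tmul, rTensor_tmul,
      ← (ℛ k u).eq, ← (ℛ k v).eq, tmul_sum, sum_tmul, map_sum, assoc_tmul, assoc_symm_tmul]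
    exact Finset.sum_comm
  · refine TensorProduct.ext' fun (u v : C) => ?_
    have h := LinearMap.congr_fun (rTensor_coactL_comp_comul (μ := μ)) v
    simp only [LinearMap.comp_apply, LinearEquiv.coe_coe, lTensor_tmul] at h ⊢
    rw [← h]
    induction comul (R := k) v using TensorProduct.induction_on with
    | zero => simp
    | tmul x y => simp
    | add y z hy hz => simp only [map_add, tmul_add, hy, hz]

lemma assoc_symm_lTensor_comul_mem_range {x : C ⊗[k] C} (hx : x ∈ cotensor μ) :
    (TensorProduct.assoc k C C C).symm ((comul (R := k) (A := C)).lTensor C x)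
      ∈ LinearMap.range ((cotensor μ).subtype.rTensor C) := by
  have hexact := Module.Flat.rTensor_exact C (cotensorEq μ).exact_subtype_ker_map
  refine (hexact _).1 ?_
  have h := LinearMap.congr_fun (rTensor_cotensorEq_comp_lTensor_comul (μ := μ)) x
  simp only [LinearMap.comp_apply, LinearEquiv.coe_coe] at h
  simp only [h, LinearMap.mem_ker.1 hx, map_zero]

lemma cocanPsi_eq_coKleisliComp :
    cocanPsi μ σ = coKleisliRTensor C (cotrans σ) ⊚ (comul ∘ₗ μ) := by
  simp only [cocanPsi, cocanF, coKleisliComp, coKleisliRTensor, leftCoaction,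
    LinearMap.lTensor_comp, LinearMap.comp_assoc]

lemma cotrans_coKleisliComp (h : σ ∘ₗ cocanF μ = LinearMap.id) :
    cotrans σ ⊚ μ = counitLeft k C A := by
  change counitLeft k C A ∘ₗ σ ∘ₗ cocanF μ = _
  rw [h, LinearMap.comp_id]

lemma coKleisliComp_cotrans_apply (hinv : σ ∘ₗ cocanF μ = LinearMap.id) {x : C ⊗[k] C}
    (hx : cocanF μ (σ x) = x) : (μ ⊚ cotrans σ) x = counitLeft k C C x := by
  calc (μ ⊚ cotrans σ) x = ((μ ⊚ cotrans σ) ⊚ μ) (σ x) := by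
        conv_lhs => rw [← hx]
        rfl
    _ = (counitLeft k C C ⊚ μ) (σ x) := by
        rw [coKleisliComp_assoc, cotrans_coKleisliComp hinv, coKleisliComp_counitLeft,
          counitLeft_coKleisliComp]
    _ = counitLeft k C C x := by
        conv_rhs => rw [← hx]
        rfl

lemma coKleisliRTensor_coKleisliComp_comul_congr {N : Type*} [AddCommMonoid N] [Module k N]
    (hrange : LinearMap.range (cocanF μ) ≤ cotensor μ) {Φ Φ' : C ⊗[k] C →ₗ[k] N}
    (h : ∀ x ∈ cotensor μ, Φ x = Φ' x) :
    coKleisliRTensor C Φ ⊚ (comul ∘ₗ μ) = coKleisliRTensor C Φ' ⊚ (comul ∘ₗ μ) := by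
  have hsub : Φ ∘ₗ (cotensor μ).subtype = Φ' ∘ₗ (cotensor μ).subtype :=
    LinearMap.ext fun x => h x x.2
  have hexpand : ∀ Ψ : C ⊗[k] C →ₗ[k] N, coKleisliRTensor C Ψ ⊚ (comul ∘ₗ μ)
      = Ψ.rTensor C ∘ₗ (TensorProduct.assoc k C C C).symm.toLinearMap
          ∘ₗ (comul (R := k) (A := C)).lTensor C ∘ₗ cocanF μ := fun Ψ => by
    simp only [coKleisliComp, coKleisliRTensor, cocanF, leftCoaction, LinearMap.lTensor_comp,
      LinearMap.comp_assoc]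
  refine LinearMap.ext fun t => ?_
  obtain ⟨z, hz⟩ := assoc_symm_lTensor_comul_mem_range (hrange ⟨t, rfl⟩)
  simp only [hexpand, LinearMap.comp_apply, LinearEquiv.coe_coe, ← hz,
    ← LinearMap.rTensor_comp_apply, hsub]

end GaloisCoextension

open CofreeComodule GaloisCoextension in
theorem cocanPsi_module_and_unique_general (μ : C ⊗[k] A →ₗ[k] C)
    (σ : C ⊗[k] C →ₗ[k] C ⊗[k] A) (hσ : IsCocanInverse μ σ) :
    (comul (R := k) (A := C) ∘ₗ μ
      = μ.rTensor C ∘ₗ (TensorProduct.assoc k C A C).symm.toLinearMap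
        ∘ₗ (cocanPsi μ σ).lTensor C ∘ₗ (TensorProduct.assoc k C C A).toLinearMap
        ∘ₗ (comul (R := k) (A := C)).rTensor A)
    ∧ (∀ ψ' : C ⊗[k] A →ₗ[k] A ⊗[k] C, IsEntwining ψ' →
        (comul (R := k) (A := C) ∘ₗ μ
          = μ.rTensor C ∘ₗ (TensorProduct.assoc k C A C).symm.toLinearMap
            ∘ₗ ψ'.lTensor C ∘ₗ (TensorProduct.assoc k C C A).toLinearMap
            ∘ₗ (comul (R := k) (A := C)).rTensor A) →
        ψ' = cocanPsi μ σ) := by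
  change comul ∘ₗ μ = coKleisliRTensor C μ ⊚ cocanPsi μ σ
    ∧ ∀ ψ', IsEntwining ψ' → comul ∘ₗ μ = coKleisliRTensor C μ ⊚ ψ' → ψ' = cocanPsi μ σ
  refine ⟨?_, fun ψ' _ hψ' => ?_⟩
  · rw [cocanPsi_eq_coKleisliComp, ← coKleisliComp_assoc, coKleisliRTensor_coKleisliComp,
      coKleisliRTensor_coKleisliComp_comul_congr hσ.1 fun x hx =>
        coKleisliComp_cotrans_apply hσ.2.1 (hσ.2.2 x hx),
      coKleisliRTensor_counitLeft, counitLeft_coKleisliComp]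
  · rw [cocanPsi_eq_coKleisliComp, hψ', ← coKleisliComp_assoc, coKleisliRTensor_coKleisliComp,
      cotrans_coKleisliComp hσ.2.1, coKleisliRTensor_counitLeft, counitLeft_coKleisliComp]

/-- for an `A`-Galois coextension `C ↠ B` with canonical entwining
map `ψ`, `C ∈ M_A^C(ψ)`, i.e. `Δ ∘ μ_C = (μ_C ⊗ C) ∘ (C ⊗ ψ) ∘ (Δ ⊗ A)`; moreover
`ψ` is the unique entwining map with this property. -/
theorem cocanPsi_module_and_unique (μ : C ⊗[k] A →ₗ[k] C) (hμ : IsAction μ)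
    (σ : C ⊗[k] C →ₗ[k] C ⊗[k] A) (hσ : IsCocanInverse μ σ) :
    (comul (R := k) (A := C) ∘ₗ μ
      = μ.rTensor C ∘ₗ (TensorProduct.assoc k C A C).symm.toLinearMap
        ∘ₗ (cocanPsi μ σ).lTensor C ∘ₗ (TensorProduct.assoc k C C A).toLinearMap
        ∘ₗ (comul (R := k) (A := C)).rTensor A)
    ∧ (∀ ψ' : C ⊗[k] A →ₗ[k] A ⊗[k] C, IsEntwining ψ' →
        (comul (R := k) (A := C) ∘ₗ μ
          = μ.rTensor C ∘ₗ (TensorProduct.assoc k C A C).symm.toLinearMap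
            ∘ₗ ψ'.lTensor C ∘ₗ (TensorProduct.assoc k C C A).toLinearMap
            ∘ₗ (comul (R := k) (A := C)).rTensor A) →
        ψ' = cocanPsi μ σ) :=
  cocanPsi_module_and_unique_general μ σ hσ
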